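/- arXiv:1512.07077 — 5 statements merged into one kernel-verified Lean document; each statement's English description precedes it below -/
import Mathlib

section
/- For any δ > n, the set of vectors a ∈ ℝⁿ that are NOT δ-badly approximable has Lebesgue measure zero; i.e., for almost every a ∈ ℝⁿ there exists c > 0 such that |q·a − m| ≥ c|q|^{−δ} for all nonzero q ∈ ℤⁿ and all m ∈ ℤ. -/
open MeasureTheory

/-- A vector `a ∈ ℝⁿ` is `δ`-badly approximable if there is `c > 0` with
`|q·a − m| ≥ c|q|^(−δ)` for all nonzero `q ∈ ℤⁿ` and all `m ∈ ℤ`. -/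
def IsDeltaBadlyApproximable {n : ℕ} (δ : ℝ) (a : Fin n → ℝ) : Prop :=
  ∃ c > (0 : ℝ), ∀ q : Fin n → ℤ, q ≠ 0 → ∀ m : ℤ,
    |(∑ i, (q i : ℝ) * a i) - (m : ℝ)| ≥
      c * (Real.sqrt (∑ i, ((q i : ℝ)) ^ 2)) ^ (-δ)

/-!
Reduce modulo `ℤⁿ`: a point of the torus `𝕋ⁿ = ℝⁿ/ℤⁿ` is badly approximable when
`‖q·x‖_{ℝ/ℤ} ≥ c|q|^{-δ}` for all `q ≠ 0`. For `q ≠ 0` the map `x ↦ q·x` is a surjective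
continuous homomorphism `𝕋ⁿ → 𝕋`, so it preserves Haar measure and
`{x : ‖q·x‖ < c|q|^{-δ}}` has measure at most `2c|q|^{-δ}`. Since `∑_{q ≠ 0} |q|^{-δ} < ∞`
for `δ > n` (lattice point count), the points violating the bound for a given `c` have measure
`O(c)`, and letting `c → 0` the non-badly-approximable points of `𝕋ⁿ` form a null set.
Its preimage in `ℝⁿ` is null because `ℝⁿ` is covered by countably many unit cubes, each
mapped measure-preservingly onto `𝕋ⁿ`.
-/

open Set Filter Topology

theorem summable_sqrt_sum_sq_rpow_neg {ι : Type*} [Fintype ι] {δ : ℝ}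
    (hδ : (Fintype.card ι : ℝ) < δ) :
    Summable fun q : ι → ℤ => Real.sqrt (∑ i, ((q i : ℝ)) ^ 2) ^ (-δ) := by
  let b := (EuclideanSpace.basisFun ι ℝ).toBasis
  let L := Submodule.span ℤ (range b)
  have hrank : Module.finrank ℤ L = Fintype.card ι := by
    rw [ZLattice.rank ℝ L, finrank_euclideanSpace]
  let e : (ι → ℤ) → L := fun q => ⟨WithLp.toLp 2 (fun i => (q i : ℝ)), by
    rw [b.mem_span_iff_repr_mem ℤ]; intro i; simp [b]⟩
  have he : Function.Injective e := fun q q' h => funext fun i => by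
    simpa [e] using congrArg (fun z : L => (z : EuclideanSpace ℝ ι) i) h
  refine ((ZLattice.summable_norm_rpow L (-δ) (by rw [hrank]; linarith)).comp_injective he).congr
    fun q => ?_
  simp [e, EuclideanSpace.norm_eq]

namespace UnitAddTorus

variable {ι : Type*}

def mk (a : ι → ℝ) : UnitAddTorus ι := fun i => (a i : UnitAddCircle)

theorem measurable_mk : Measurable (mk : (ι → ℝ) → UnitAddTorus ι) :=
  measurable_pi_lambda _ fun i => AddCircle.measurable_mk'.comp (measurable_pi_apply i)

variable [Fintype ι]

theorem quasiMeasurePreserving_mk :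
    Measure.QuasiMeasurePreserving (mk : (ι → ℝ) → UnitAddTorus ι) volume volume := by
  refine ⟨measurable_mk, Measure.AbsolutelyContinuous.mk fun s hs hs0 => ?_⟩
  rw [Measure.map_apply measurable_mk hs]
  let cube (k : ι → ℤ) : Set (ι → ℝ) := univ.pi fun i => Ioc (k i : ℝ) (k i + 1)
  have hcover : mk ⁻¹' s ⊆ ⋃ k, mk ⁻¹' s ∩ cube k := fun x hx =>
    mem_iUnion.2 ⟨fun i => ⌈x i⌉ - 1, hx, fun i _ => by
      push_cast
      exact ⟨by linarith [Int.ceil_lt_add_one (x i)], by linarith [Int.le_ceil (x i)]⟩⟩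
  refine measure_mono_null hcover (measure_iUnion_null fun k => ?_)
  have hmp : MeasurePreserving mk
      ((volume : Measure (ι → ℝ)).restrict (cube k)) volume := by
    rw [volume_pi, Measure.restrict_pi_pi]
    exact measurePreserving_pi _ _ fun i => UnitAddCircle.measurePreserving_mk (k i)
  rw [← Measure.restrict_apply (measurable_mk hs), hmp.measure_preimage hs.nullMeasurableSet, hs0]

def character (q : ι → ℤ) : UnitAddTorus ι →+ UnitAddCircle :=
  ∑ i, q i • Pi.evalAddMonoidHom (fun _ => UnitAddCircle) i

theorem character_apply (q : ι → ℤ) (x : UnitAddTorus ι) :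
    character q x = ∑ i, q i • x i := by
  simp [character]

theorem character_mk (q : ι → ℤ) (a : ι → ℝ) :
    character q (mk a) = ((∑ i, (q i : ℝ) * a i : ℝ) : UnitAddCircle) := by
  simp only [character_apply, mk, QuotientAddGroup.mk_sum, ← zsmul_eq_mul, AddCircle.coe_zsmul]

theorem continuous_character (q : ι → ℤ) : Continuous (character q) := by
  rw [show ⇑(character q) = fun x => ∑ i, q i • x i from funext (character_apply q)]
  fun_prop

theorem character_surjective {q : ι → ℤ} (hq : q ≠ 0) :
    Function.Surjective (character q) := by
  classical
  obtain ⟨i, hi⟩ := Function.ne_iff.1 hq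
  intro y
  obtain ⟨t, rfl⟩ := QuotientAddGroup.mk_surjective y
  refine ⟨Pi.single i ((t / q i : ℝ) : UnitAddCircle), ?_⟩
  rw [character_apply, Finset.sum_eq_single i (fun j _ hj => by simp [hj]) (by simp),
    Pi.single_eq_same, ← AddCircle.coe_zsmul, zsmul_eq_mul,
    mul_div_cancel₀ _ (by exact_mod_cast hi)]

theorem measurePreserving_character {q : ι → ℤ} (hq : q ≠ 0) :
    MeasurePreserving (character q) volume volume :=
  AddMonoidHom.measurePreserving (continuous_character q) (character_surjective hq)
    (by simp [volume_pi, Measure.pi_univ])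

theorem volume_norm_character_lt_le {q : ι → ℤ} (hq : q ≠ 0) (ε : ℝ) :
    volume {x | ‖character q x‖ < ε} ≤ ENNReal.ofReal (2 * ε) := by
  have : {x | ‖character q x‖ < ε} = character q ⁻¹' Metric.ball 0 ε := by
    ext x; simp only [mem_ofPred_eq, mem_preimage, mem_ball_zero_iff]
  rw [this, (measurePreserving_character hq).measure_preimage measurableSet_ball.nullMeasurableSet]
  calc volume (Metric.ball (0 : UnitAddCircle) ε)
      ≤ volume (Metric.closedBall (0 : UnitAddCircle) ε) :=
        measure_mono Metric.ball_subset_closedBall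
    _ = ENNReal.ofReal (min 1 (2 * ε)) := AddCircle.volume_closedBall 1 ε
    _ ≤ ENNReal.ofReal (2 * ε) := ENNReal.ofReal_le_ofReal (min_le_right _ _)

theorem norm_character_mk_le (q : ι → ℤ) (a : ι → ℝ) (m : ℤ) :
    ‖character q (mk a)‖ ≤ |∑ i, (q i : ℝ) * a i - m| := by
  have hm : ((m : ℝ) : UnitAddCircle) = 0 := (AddCircle.coe_eq_zero_iff 1).2 ⟨m, by simp⟩
  rw [character_mk, ← sub_zero ((_ : ℝ) : UnitAddCircle), ← hm, ← AddCircle.coe_sub]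
  exact QuotientAddGroup.norm_mk_le_norm

theorem volume_exists_norm_character_lt_le (w : (ι → ℤ) → ℝ) :
    volume {x | ∃ q ≠ 0, ‖character q x‖ < w q} ≤ ∑' q, ENNReal.ofReal (2 * w q) := by
  have hcover : {x | ∃ q ≠ 0, ‖character q x‖ < w q} ⊆
      ⋃ (q : ι → ℤ) (_ : q ≠ 0), {x | ‖character q x‖ < w q} :=
    fun x ⟨q, hq, hlt⟩ => mem_biUnion hq hlt
  refine (measure_mono hcover).trans <|
    (measure_iUnion_le _).trans (ENNReal.tsum_le_tsum fun q => ?_)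
  rcases eq_or_ne q 0 with rfl | hq
  · simp
  · exact (measure_mono (iUnion_subset fun _ => Subset.rfl)).trans
      (volume_norm_character_lt_le hq _)

theorem ae_exists_forall_le_norm_character {δ : ℝ} (hδ : (Fintype.card ι : ℝ) < δ) :
    ∀ᵐ x : UnitAddTorus ι, ∃ c > (0 : ℝ), ∀ q : ι → ℤ, q ≠ 0 →
      c * Real.sqrt (∑ i, ((q i : ℝ)) ^ 2) ^ (-δ) ≤ ‖character q x‖ := by
  set r : (ι → ℤ) → ℝ := fun q => Real.sqrt (∑ i, ((q i : ℝ)) ^ 2) ^ (-δ)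
  set K : ENNReal := ∑' q, ENNReal.ofReal (r q) with hK_def
  have hK : K ≠ ⊤ := by
    rw [hK_def, ← ENNReal.ofReal_tsum_of_nonneg (f := r) (fun q => by positivity)
      (summable_sqrt_sum_sq_rpow_neg hδ)]
    exact ENNReal.ofReal_ne_top
  rw [ae_iff]
  have hbound : ∀ c > (0 : ℝ), volume {x : UnitAddTorus ι |
      ¬ ∃ c > (0 : ℝ), ∀ q : ι → ℤ, q ≠ 0 → c * r q ≤ ‖character q x‖} ≤
      ENNReal.ofReal (2 * c) * K := fun c hc => calc
    _ ≤ volume {x | ∃ q ≠ 0, ‖character q x‖ < c * r q} := measure_mono fun x hx => by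
        push Not at hx
        exact hx c hc
    _ ≤ ∑' q, ENNReal.ofReal (2 * (c * r q)) := volume_exists_norm_character_lt_le _
    _ = ENNReal.ofReal (2 * c) * K := by
        simp_rw [← mul_assoc, ENNReal.ofReal_mul (by positivity : 0 ≤ 2 * c)]
        exact ENNReal.tsum_mul_left
  have hlim : Tendsto (fun c => ENNReal.ofReal (2 * c) * K) (𝓝[>] 0) (𝓝 0) := by
    have h2c : Tendsto (fun c : ℝ => ENNReal.ofReal (2 * c)) (𝓝[>] 0) (𝓝 0) := by
      simpa using (ENNReal.tendsto_ofReal ((continuous_const_mul (2 : ℝ)).tendsto 0)).mono_left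
        nhdsWithin_le_nhds
    simpa using ENNReal.Tendsto.mul_const h2c (Or.inr hK)
  exact le_antisymm (ge_of_tendsto hlim (eventually_nhdsWithin_of_forall hbound)) bot_le

end UnitAddTorus

/-- For any `δ > n`, the set of vectors of `ℝⁿ` that are not `δ`-badly
approximable has Lebesgue measure zero. -/
theorem ae_isDeltaBadlyApproximable (n : ℕ) (δ : ℝ) (hδ : (n : ℝ) < δ) :
    volume {a : Fin n → ℝ | ¬ IsDeltaBadlyApproximable δ a} = 0 := by
  rw [← ae_iff]
  have hδ' : (Fintype.card (Fin n) : ℝ) < δ := by rwa [Fintype.card_fin]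
  filter_upwards [UnitAddTorus.quasiMeasurePreserving_mk.ae
    (UnitAddTorus.ae_exists_forall_le_norm_character hδ')] with a ⟨c, hc, hbound⟩
  exact ⟨c, hc, fun q hq m => (hbound q hq).trans (UnitAddTorus.norm_character_mk_le q a m)⟩
end

section
/- Let f : [1,∞) → (0,∞) be continuous with x ↦ x²f(x) non-increasing. If the series ∑_{q≥1} q·f(q) converges, then the set K(f) of f-approximable real numbers has Lebesgue measure zero. -/
open MeasureTheory

open Filter

/-- A real number `θ` is `f`-approximable if `|θ − p/q| < f q` for infinitely many
rationals `p/q`. -/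
def IsApproximable (f : ℝ → ℝ) (θ : ℝ) : Prop :=
  {r : ℚ | |θ - (r : ℝ)| < f (r.den : ℝ)}.Infinite

/-- If `f : [1,∞) → (0,∞)` is continuous with `x ↦ x² f x` non-increasing and
`∑_{q ≥ 1} q f(q)` converges, then the set of `f`-approximable numbers is Lebesgue null. -/
theorem measure_setOf_approximable_eq_zero (f : ℝ → ℝ)
    (hcont : ContinuousOn f (Set.Ici (1 : ℝ)))
    (hpos : ∀ x ∈ Set.Ici (1 : ℝ), 0 < f x)
    (hmono : AntitoneOn (fun x => x ^ 2 * f x) (Set.Ici (1 : ℝ)))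
    (hsum : Summable fun q : ℕ+ => (q : ℝ) * f (q : ℝ)) :
    volume {θ : ℝ | IsApproximable f θ} = 0 := by
  have h1 : (1:ℝ) ∈ Set.Ici (1:ℝ) := Set.mem_Ici.2 le_rfl
  have hB : 0 < f 1 := hpos 1 h1
  have hfle : ∀ q : ℕ, 1 ≤ q → f q ≤ f 1 := by
    intro q hq
    have hq1 : (1:ℝ) ≤ (q:ℝ) := by exact_mod_cast hq
    have h2 := hmono h1 hq1 hq1
    simp only [one_pow, one_mul] at h2
    have h3 : (1:ℝ) ≤ (q:ℝ)^2 := by nlinarith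
    nlinarith [hpos q hq1]
  -- summability facts
  have hinj : Function.Injective (fun q : ℕ+ => (q:ℕ)) := fun a b h => PNat.coe_injective h
  have hF : Summable (fun q : ℕ => if q = 0 then 0 else (q:ℝ) * f q) := by
    rw [← hinj.summable_iff (f := fun q : ℕ => if q = 0 then 0 else (q:ℝ) * f q) ?_]
    · refine hsum.congr fun q => ?_
      simp [q.ne_zero]
    · intro x hx
      have : x = 0 := by
        by_contra h
        exact hx ⟨⟨x, Nat.pos_of_ne_zero h⟩, rfl⟩
      simp [this]
  have hFnn : ∀ q : ℕ, 0 ≤ (if q = 0 then 0 else (q:ℝ) * f q) := by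
    intro q
    rcases Nat.eq_zero_or_pos q with h | h
    · simp [h]
    · have hq1 : (1:ℝ) ≤ (q:ℝ) := by exact_mod_cast h
      simp only [Nat.pos_iff_ne_zero.1 h, if_false]
      exact mul_nonneg (by positivity) (hpos _ hq1).le
  have hF2 : Summable (fun q : ℕ => if q = 0 then 0 else f q) := by
    refine hF.of_nonneg_of_le (fun q => ?_) (fun q => ?_)
    · rcases Nat.eq_zero_or_pos q with h | h
      · simp [h]
      · have hq1 : (1:ℝ) ≤ (q:ℝ) := by exact_mod_cast h
        simp only [Nat.pos_iff_ne_zero.1 h, if_false]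
        exact (hpos _ hq1).le
    · rcases Nat.eq_zero_or_pos q with h | h
      · simp [h]
      · have hq1 : (1:ℝ) ≤ (q:ℝ) := by exact_mod_cast h
        simp only [Nat.pos_iff_ne_zero.1 h, if_false]
        nlinarith [hpos _ hq1]
  set g : ℕ → ℝ := fun q =>
    (2*(1 + 2*f 1)) * (if q = 0 then 0 else (q:ℝ) * f q) + 2*(if q = 0 then 0 else f q) with hg
  have hgsum : Summable g := (hF.mul_left _).add (hF2.mul_left 2)
  have hgnn : ∀ q, 0 ≤ g q := by
    intro q
    rcases Nat.eq_zero_or_pos q with h | h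
    · simp [hg, h]
    · have hq1 : (1:ℝ) ≤ (q:ℝ) := by exact_mod_cast h
      simp only [hg, Nat.pos_iff_ne_zero.1 h, if_false]
      have hfq := hpos _ hq1
      have h0 : 0 ≤ (q:ℝ) * f q := mul_nonneg (by positivity) hfq.le
      nlinarith [hfq, hB, h0]
  -- main step: approximable numbers in [n, n+1] form a null set
  have key : ∀ n : ℤ, volume ({θ : ℝ | IsApproximable f θ} ∩ Set.Icc (n:ℝ) (n+1)) = 0 := by
    intro n
    set a : ℝ := (n:ℝ) - f 1 with ha
    set b : ℝ := (n:ℝ) + 1 + f 1 with hb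
    set T : ℕ → Set ℚ := fun q => {r : ℚ | r.den = q ∧ a ≤ (r:ℝ) ∧ (r:ℝ) ≤ b} with hT
    set S : ℕ → Set ℝ := fun q => ⋃ r ∈ T q, Metric.ball (r:ℝ) (f q) with hS
    -- T q is contained in the image of an integer interval
    have hTsub : ∀ q : ℕ, 1 ≤ q →
        T q ⊆ (fun p : ℤ => ((p:ℚ)/(q:ℚ) : ℚ)) '' ↑(Finset.Icc ⌈a*q⌉ ⌊b*q⌋) := by
      intro q hq r hr
      obtain ⟨hden, hra, hrb⟩ := hr
      have hqpos : (0:ℝ) < (q:ℝ) := by exact_mod_cast hq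
      refine ⟨r.num, ?_, ?_⟩
      · simp only [Finset.coe_Icc, Set.mem_Icc]
        constructor
        · apply Int.ceil_le.2
          have : a * q ≤ (r:ℝ) * q := by nlinarith
          calc a * q ≤ (r:ℝ) * q := this
            _ = (r.num : ℝ) := by
                rw [← hden]; push_cast [Rat.cast_def]
                field_simp
        · apply Int.le_floor.2
          have : (r:ℝ) * q ≤ b * q := by nlinarith
          calc (r.num : ℝ) = (r:ℝ) * q := by
                rw [← hden]; push_cast [Rat.cast_def]; field_simp
            _ ≤ b * q := this
      · rw [← hden]
        exact_mod_cast (Rat.num_div_den r)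
    have hTfin : ∀ q : ℕ, (T q).Finite := by
      intro q
      rcases Nat.eq_zero_or_pos q with h | h
      · convert Set.finite_empty
        ext r; simp [hT, h, r.den_nz]
      · exact ((Finset.Icc ⌈a*q⌉ ⌊b*q⌋).finite_toSet.image _).subset (hTsub q h)
    -- volume bound
    have hvol : ∀ q : ℕ, volume (S q) ≤ ENNReal.ofReal (g q) := by
      intro q
      rcases Nat.eq_zero_or_pos q with h | h
      · have : S q = ∅ := by
          simp only [hS, Set.iUnion_eq_empty]
          intro r
          simp [hT, h, r.den_nz]
        simp [this]
      · have hq1 : (1:ℝ) ≤ (q:ℝ) := by exact_mod_cast h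
        have hsub : S q ⊆ ⋃ p ∈ Finset.Icc ⌈a*q⌉ ⌊b*q⌋, Metric.ball ((p:ℝ)/(q:ℝ)) (f q) := by
          intro x hx
          simp only [hS, Set.mem_iUnion] at hx
          obtain ⟨r, hr, hball⟩ := hx
          obtain ⟨p, hp, hpr⟩ := hTsub q h hr
          refine Set.mem_iUnion₂.2 ⟨p, by simpa using hp, ?_⟩
          have : ((p:ℝ)/(q:ℝ)) = (r:ℝ) := by rw [← hpr]; push_cast; ring
          rwa [this]
        calc volume (S q) ≤ volume (⋃ p ∈ Finset.Icc ⌈a*q⌉ ⌊b*q⌋,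
              Metric.ball ((p:ℝ)/(q:ℝ)) (f q)) := measure_mono hsub
          _ ≤ ∑ p ∈ Finset.Icc ⌈a*q⌉ ⌊b*q⌋, volume (Metric.ball ((p:ℝ)/(q:ℝ)) (f q)) :=
              measure_biUnion_finset_le _ _
          _ = (Finset.Icc ⌈a*q⌉ ⌊b*q⌋).card * ENNReal.ofReal (2 * f q) := by
              simp [Real.volume_ball, Finset.sum_const, nsmul_eq_mul]
          _ ≤ ENNReal.ofReal ((1 + 2*f 1)*q + 1) * ENNReal.ofReal (2 * f q) := by
              gcongr
              · rw [← ENNReal.ofReal_natCast]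
                apply ENNReal.ofReal_le_ofReal
                have hcard : ((Finset.Icc ⌈a*q⌉ ⌊b*q⌋).card : ℝ) ≤ (1 + 2*f 1)*q + 1 := by
                  rw [Int.card_Icc]
                  rcases le_or_gt (⌊b*q⌋ + 1 - ⌈a*q⌉) 0 with hc | hc
                  · rw [Int.toNat_of_nonpos hc]
                    push_cast; nlinarith
                  · have hcast : (((⌊b*(q:ℝ)⌋ + 1 - ⌈a*(q:ℝ)⌉).toNat : ℝ)) = ((⌊b*(q:ℝ)⌋ + 1 - ⌈a*(q:ℝ)⌉ : ℤ) : ℝ) := by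
                      exact_mod_cast Int.toNat_of_nonneg hc.le
                    rw [hcast]
                    have h4 : ((⌊b*q⌋ : ℝ)) ≤ b*q := Int.floor_le _
                    have h5 : a*q ≤ ((⌈a*q⌉ : ℝ)) := Int.le_ceil _
                    push_cast
                    simp only [ha, hb] at h4 h5 ⊢
                    nlinarith
                exact hcard
          _ = ENNReal.ofReal (((1 + 2*f 1)*q + 1) * (2 * f q)) := by
              rw [← ENNReal.ofReal_mul (by nlinarith)]
          _ ≤ ENNReal.ofReal (g q) := by
              apply ENNReal.ofReal_le_ofReal
              simp only [hg, Nat.pos_iff_ne_zero.1 h, if_false]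
              ring_nf
              nlinarith [hpos _ hq1]
    -- Borel–Cantelli
    have hBC : volume (limsup S atTop) = 0 := by
      apply measure_limsup_atTop_eq_zero
      have : ∑' q, volume (S q) ≤ ∑' q, ENNReal.ofReal (g q) := ENNReal.tsum_le_tsum hvol
      rw [← ENNReal.ofReal_tsum_of_nonneg hgnn hgsum] at this
      exact ne_top_of_le_ne_top ENNReal.ofReal_ne_top this
    refine measure_mono_null ?_ hBC
    rintro θ ⟨hθ, hθI⟩
    rw [mem_limsup_iff_frequently_mem, frequently_atTop]
    intro N
    -- every approximating rational lies in T of its denominator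
    have hmem : ∀ r ∈ {r : ℚ | |θ - (r : ℝ)| < f (r.den : ℝ)}, r ∈ T r.den := by
      intro r hr
      have hd1 : (1:ℝ) ≤ (r.den : ℝ) := by exact_mod_cast r.pos
      have habs : |θ - (r:ℝ)| < f 1 := lt_of_lt_of_le hr (hfle r.den r.pos)
      rw [abs_sub_lt_iff] at habs
      obtain ⟨hI1, hI2⟩ := hθI
      exact ⟨rfl, by simp only [ha]; linarith [habs.1, habs.2],
        by simp only [hb]; linarith [habs.1, habs.2]⟩
    obtain ⟨r, hrR, hrN⟩ : ∃ r ∈ {r : ℚ | |θ - (r : ℝ)| < f (r.den : ℝ)}, N ≤ r.den := by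
      by_contra hcon
      push_neg at hcon
      apply hθ
      refine Set.Finite.subset (Set.Finite.biUnion (Finset.range N).finite_toSet
        (fun q _ => hTfin q)) ?_
      intro r hr
      exact Set.mem_biUnion (by simpa using hcon r hr) (hmem r hr)
    refine ⟨r.den, hrN, ?_⟩
    exact Set.mem_biUnion (hmem r hrR) (by simpa [Real.dist_eq, abs_sub_comm] using hrR)
  -- assemble
  have hcover : {θ : ℝ | IsApproximable f θ} ⊆
      ⋃ n : ℤ, ({θ : ℝ | IsApproximable f θ} ∩ Set.Icc (n:ℝ) (n+1)) := by
    intro θ hθ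
    exact Set.mem_iUnion.2 ⟨⌊θ⌋, hθ, Int.floor_le θ, (Int.lt_floor_add_one θ).le⟩
  exact measure_mono_null hcover (measure_iUnion_null key)
end

section
/- Almost every matrix Θ ∈ M_n(ℝ) ≅ ℝ^{n²} (with respect to Lebesgue measure) is badly approximable. -/
open MeasureTheory

/-- A vector `a ∈ ℝⁿ` is badly approximable if it is `δ`-badly approximable for some
`δ > 0`. -/
def IsBadlyApproximableVec {n : ℕ} (a : Fin n → ℝ) : Prop :=
  ∃ δ > (0 : ℝ), ∃ c > (0 : ℝ), ∀ q : Fin n → ℤ, q ≠ 0 → ∀ m : ℤ,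
    |(∑ i, (q i : ℝ) * a i) - (m : ℝ)| ≥
      c * (Real.sqrt (∑ i, ((q i : ℝ)) ^ 2)) ^ (-δ)

/-- `Θ ∈ M_n(ℝ)` is badly approximable if `ᵗΘ(u)` is a badly approximable vector for
some `u ∈ ℤⁿ`. -/
def IsBadlyApproximableMatrix {n : ℕ} (Θ : Matrix (Fin n) (Fin n) ℝ) : Prop :=
  ∃ u : Fin n → ℤ, IsBadlyApproximableVec (Θ.transpose.mulVec (fun i => (u i : ℝ)))

/-! Fix `δ > n`. A vector that is not badly approximable lies, for every `c > 0`, in a slab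
`|q • a - m| < c ‖q‖^(-δ)` with `q ≠ 0`. Inside a ball of radius `R`, the slabs belonging to one `q`
are about `‖q‖` in number, each of width about `c ‖q‖^(-δ-1)`, so their union has volume
`O(c ‖q‖^(-δ))`; since `∑ q, ‖q‖^(-δ)` converges, the non-badly-approximable vectors of the ball
have measure `O(c)` for every `c`, hence measure zero. A matrix is badly approximable as soon as
one of its rows is (take `u` a basis vector), and almost every matrix has a badly approximable
first row. -/

open Metric Set Filter Topology

lemma Matrix.det_updateRow_one {ι R : Type*} [Fintype ι] [DecidableEq ι] [CommRing R] (i : ι)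
    (q : ι → R) : ((1 : Matrix ι ι R).updateRow i q).det = q i := by
  convert Matrix.det_updateRow_sum (1 : Matrix ι ι R) i q using 3
  · ext j; simp [Matrix.one_apply]
  · simp

section Lattice

variable {ι : Type*} [Fintype ι]

lemma summable_pi_int_norm_rpow_neg {δ : ℝ} (hδ : Fintype.card ι < δ) :
    Summable fun q : ι → ℤ => ‖q‖ ^ (-δ) := by
  classical
  let L := Submodule.span ℤ (Set.range (Pi.basisFun ℝ ι))
  have hL : Module.finrank ℤ L = Fintype.card ι := by
    rw [ZLattice.rank ℝ L, Module.finrank_fintype_fun_eq_card]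
  let e : (ι → ℤ) → L := fun q => ⟨fun i => q i, (Submodule.mem_span_range_iff_exists_fun ℤ).2
    ⟨q, by ext i; simp [Pi.basisFun_apply, Pi.single_apply]⟩⟩
  have he : e.Injective := fun q r h => by
    ext i; simpa [e] using congrFun (congrArg Subtype.val h) i
  refine ((ZLattice.summable_norm_rpow L (-δ) (by rw [hL]; linarith)).comp_injective he).congr
    fun q => ?_
  simp only [Function.comp_apply, e, Pi.norm_def]
  congr 3

lemma one_le_pi_int_norm {q : ι → ℤ} (hq : q ≠ 0) : 1 ≤ ‖q‖ := by
  obtain ⟨i, hi⟩ := Function.ne_iff.1 hq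
  exact le_trans (by rw [Int.norm_eq_abs]; exact_mod_cast Int.one_le_abs hi) (norm_le_pi_norm q i)

lemma pi_int_norm_le_sqrt_sum_sq (q : ι → ℤ) : ‖q‖ ≤ √(∑ i, (q i : ℝ) ^ 2) :=
  (pi_norm_le_iff_of_nonneg (Real.sqrt_nonneg _)).2 fun i => by
    rw [Int.norm_eq_abs]
    exact Real.abs_le_sqrt <|
      Finset.single_le_sum (f := fun j => (q j : ℝ) ^ 2) (fun _ _ => sq_nonneg _)
        (Finset.mem_univ i)

end Lattice

lemma Int.card_Icc_neg_ceil_ceil_le {L : ℝ} (hL : 0 ≤ L) :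
    ((Finset.Icc (-⌈L⌉) ⌈L⌉).card : ℝ) ≤ 2 * L + 3 := by
  rw [Int.card_Icc, ← Int.cast_natCast, Int.toNat_of_nonneg (by linarith [Int.ceil_nonneg hL])]
  push_cast
  linarith [Int.ceil_lt_add_one L]

section Slab

variable {ι : Type*} [Fintype ι] [DecidableEq ι]

lemma volume_slab_inter_closedBall_le (q : ι → ℝ) {i : ι} (hi : q i ≠ 0) (t ε R : ℝ) :
    volume ({a : ι → ℝ | |∑ j, q j * a j - t| < ε} ∩ closedBall 0 R) ≤
      ENNReal.ofReal (2 * ε / |q i|) * ENNReal.ofReal (2 * R) ^ (Fintype.card ι - 1) := by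
  set f := Matrix.toLin' ((1 : Matrix ι ι ℝ).updateRow i q)
  have hf : LinearMap.det f = q i := by rw [LinearMap.det_toLin', Matrix.det_updateRow_one]
  set box : Set (ι → ℝ) := univ.pi (Function.update (fun _ => closedBall 0 R) i (ball t ε))
  have hsub : {a : ι → ℝ | |∑ j, q j * a j - t| < ε} ∩ closedBall 0 R ⊆ f ⁻¹' box := by
    rintro a ⟨hslab : |_ - t| < ε, hball⟩ j -
    rcases eq_or_ne j i with rfl | hj
    · simpa [f, Matrix.mulVec, dotProduct, Real.dist_eq] using hslab
    · simpa [f, Matrix.mulVec, dotProduct, Matrix.one_apply, hj] using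
        (norm_le_pi_norm a j).trans (mem_closedBall_zero_iff.1 hball)
  have hbox : ∀ j, volume (Function.update (fun _ => closedBall 0 R) i (ball t ε) j) =
      Function.update (fun _ => ENNReal.ofReal (2 * R)) i (ENNReal.ofReal (2 * ε)) j := by
    intro j
    rcases eq_or_ne j i with rfl | hj
    · simp [Real.volume_ball]
    · simp [hj, Real.volume_closedBall]
  calc volume _ ≤ volume (f ⁻¹' box) := measure_mono hsub
    _ = ENNReal.ofReal |(q i)⁻¹| * volume box := by
      rw [Measure.addHaar_preimage_linearMap _ (hf ▸ hi), hf]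
    _ = _ := by
      rw [volume_pi_pi, Finset.prod_congr rfl fun j _ => hbox j,
        Finset.prod_update_of_mem (Finset.mem_univ i), Finset.prod_const, ← mul_assoc,
        ← ENNReal.ofReal_mul (abs_nonneg _), abs_inv, inv_mul_eq_div,
        Finset.sdiff_singleton_eq_erase, Finset.card_erase_of_mem (Finset.mem_univ _),
        Finset.card_univ]

omit [DecidableEq ι] in
lemma abs_sum_mul_le_of_abs_le {q a : ι → ℝ} {M R : ℝ} (hq : ∀ j, |q j| ≤ M)
    (ha : ∀ j, |a j| ≤ R) : |∑ j, q j * a j| ≤ Fintype.card ι * (M * R) := by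
  calc |∑ j, q j * a j| ≤ ∑ j, |q j| * |a j| := by
        simpa only [abs_mul] using Finset.abs_sum_le_sum_abs (fun j => q j * a j) Finset.univ
    _ ≤ ∑ _j : ι, M * R := Finset.sum_le_sum fun j _ =>
        mul_le_mul (hq j) (ha j) (abs_nonneg _) ((abs_nonneg _).trans (hq j))
    _ = _ := by simp

lemma volume_iUnion_slab_inter_closedBall_le (q : ι → ℤ) (hq : q ≠ 0) {ε R : ℝ} (hε₀ : 0 ≤ ε)
    (hε₁ : ε ≤ 1) (hR : 0 ≤ R) :
    volume (⋃ m : ℤ, {a : ι → ℝ | |∑ j, (q j : ℝ) * a j - m| < ε} ∩ closedBall 0 R) ≤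
      ENNReal.ofReal (2 * (2 * Fintype.card ι * R + 5) * (2 * R) ^ (Fintype.card ι - 1) * ε) := by
  set S : ℤ → Set (ι → ℝ) := fun m => {a | |∑ j, (q j : ℝ) * a j - m| < ε} ∩ closedBall 0 R
  obtain ⟨j₀, hj₀⟩ : ∃ j, q j ≠ 0 := Function.ne_iff.1 hq
  obtain ⟨i, -, hi⟩ :=
    Finset.exists_max_image Finset.univ (fun j => |(q j : ℝ)|) ⟨j₀, Finset.mem_univ _⟩
  set M : ℝ := |(q i : ℝ)|
  have hM : 1 ≤ M := le_trans (by exact_mod_cast Int.one_le_abs hj₀) (hi j₀ (Finset.mem_univ _))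
  set L : ℝ := Fintype.card ι * (M * R) + 1
  have hm : ∀ m : ℤ, (S m).Nonempty → m ∈ Finset.Icc (-⌈L⌉) ⌈L⌉ := by
    rintro m ⟨a, ha : |_ - _| < ε, hball⟩
    have := abs_sum_mul_le_of_abs_le (fun j => hi j (Finset.mem_univ _)) fun j =>
      (norm_le_pi_norm a j).trans (mem_closedBall_zero_iff.1 hball)
    rw [Finset.mem_Icc, ← abs_le, ← Int.cast_le (R := ℝ), Int.cast_abs]
    have := abs_sub_abs_le_abs_sub (m : ℝ) (∑ j, (q j : ℝ) * a j)
    rw [abs_sub_comm] at this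
    linarith [Int.le_ceil L]
  have hcard := Int.card_Icc_neg_ceil_ceil_le (show 0 ≤ L by positivity)
  calc volume (⋃ m, S m) ≤ volume (⋃ m ∈ Finset.Icc (-⌈L⌉) ⌈L⌉, S m) := by
        exact measure_mono (iUnion_subset fun m a ha => mem_biUnion (hm m ⟨a, ha⟩) ha)
    _ ≤ ∑ m ∈ Finset.Icc (-⌈L⌉) ⌈L⌉, volume (S m) := measure_biUnion_finset_le _ _
    _ ≤ (Finset.Icc (-⌈L⌉) ⌈L⌉).card •
          (ENNReal.ofReal (2 * ε / M) * ENNReal.ofReal (2 * R) ^ (Fintype.card ι - 1)) :=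
        Finset.sum_le_card_nsmul _ _ _ fun m _ => volume_slab_inter_closedBall_le
          (fun j => (q j : ℝ)) (abs_pos.1 (zero_lt_one.trans_le hM)) _ _ _
    _ ≤ _ := by
      rw [nsmul_eq_mul, ← ENNReal.ofReal_natCast, ← ENNReal.ofReal_pow (by positivity),
        ← ENNReal.ofReal_mul (by positivity), ← ENNReal.ofReal_mul (by positivity)]
      refine ENNReal.ofReal_le_ofReal ?_
      calc _ ≤ (2 * L + 3) * (2 * ε / M * (2 * R) ^ (Fintype.card ι - 1)) :=
            mul_le_mul_of_nonneg_right hcard (by positivity)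
        _ = 2 * (2 * Fintype.card ι * R + 5 / M) * (2 * R) ^ (Fintype.card ι - 1) * ε := by
            field_simp
            ring
        _ ≤ _ := by
            gcongr
            exact div_le_self (by norm_num) hM

end Slab

lemma setOf_not_isBadlyApproximableVec_subset {n : ℕ} {δ c : ℝ} (hδ : 0 < δ) (hc : 0 < c) :
    {a : Fin n → ℝ | ¬ IsBadlyApproximableVec a} ⊆
      ⋃ q : Fin n → ℤ, ⋃ m : ℤ, {a | |∑ i, (q i : ℝ) * a i - m| < c * ‖q‖ ^ (-δ)} := by
  intro a ha
  simp only [IsBadlyApproximableVec, not_exists, not_and, not_forall, not_le] at ha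
  obtain ⟨q, hq, m, hm⟩ := ha δ hδ c hc
  refine mem_iUnion₂.2 ⟨q, m, hm.trans_le <| mul_le_mul_of_nonneg_left ?_ hc.le⟩
  exact Real.rpow_le_rpow_of_nonpos (zero_lt_one.trans_le (one_le_pi_int_norm hq))
    (pi_int_norm_le_sqrt_sum_sq q) (neg_nonpos.2 hδ.le)

lemma volume_not_isBadlyApproximableVec_inter_closedBall_le {n : ℕ} {c R : ℝ} (hc₀ : 0 < c)
    (hc₁ : c ≤ 1) (hR : 0 ≤ R) :
    volume ({a : Fin n → ℝ | ¬ IsBadlyApproximableVec a} ∩ closedBall 0 R) ≤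
      ENNReal.ofReal (c * (2 * (2 * n * R + 5) * (2 * R) ^ (n - 1) *
        ∑' q : Fin n → ℤ, ‖q‖ ^ (-(n + 1 : ℝ)))) := by
  set δ : ℝ := n + 1
  have hδ : 0 < δ := by positivity
  set C : ℝ := 2 * (2 * n * R + 5) * (2 * R) ^ (n - 1)
  set S : (Fin n → ℤ) → Set (Fin n → ℝ) := fun q =>
    ⋃ m : ℤ, {a | |∑ i, (q i : ℝ) * a i - m| < c * ‖q‖ ^ (-δ)} ∩ closedBall 0 R
  have hsub : {a : Fin n → ℝ | ¬ IsBadlyApproximableVec a} ∩ closedBall 0 R ⊆ ⋃ q, S q := by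
    rintro a ⟨ha, hball⟩
    obtain ⟨q, m, hm⟩ := mem_iUnion₂.1 (setOf_not_isBadlyApproximableVec_subset hδ hc₀ ha)
    exact mem_iUnion₂.2 ⟨q, m, hm, hball⟩
  have hS : ∀ q, volume (S q) ≤ ENNReal.ofReal (C * (c * ‖q‖ ^ (-δ))) := by
    intro q
    rcases eq_or_ne q 0 with rfl | hq
    · simp [S, Real.zero_rpow (neg_ne_zero.2 hδ.ne'), (abs_nonneg _).not_gt]
    · have hε : c * ‖q‖ ^ (-δ) ≤ 1 := mul_le_one₀ hc₁ (by positivity)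
        (Real.rpow_le_one_of_one_le_of_nonpos (one_le_pi_int_norm hq) (neg_nonpos.2 hδ.le))
      simpa [C] using volume_iUnion_slab_inter_closedBall_le q hq (by positivity) hε hR
  have hsum : Summable fun q : Fin n → ℤ => C * (c * ‖q‖ ^ (-δ)) :=
    ((summable_pi_int_norm_rpow_neg (by simp [δ])).mul_left c).mul_left C
  calc volume _ ≤ volume (⋃ q, S q) := measure_mono hsub
    _ ≤ ∑' q, volume (S q) := measure_iUnion_le _
    _ ≤ ∑' q, ENNReal.ofReal (C * (c * ‖q‖ ^ (-δ))) := ENNReal.tsum_le_tsum hS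
    _ = _ := by
      rw [← ENNReal.ofReal_tsum_of_nonneg (fun q => by positivity) hsum, tsum_mul_left,
        tsum_mul_left]
      ring_nf

lemma volume_not_isBadlyApproximableVec_inter_closedBall {n : ℕ} {R : ℝ} (hR : 0 ≤ R) :
    volume ({a : Fin n → ℝ | ¬ IsBadlyApproximableVec a} ∩ closedBall 0 R) = 0 := by
  set K : ℝ := 2 * (2 * n * R + 5) * (2 * R) ^ (n - 1) * ∑' q : Fin n → ℤ, ‖q‖ ^ (-(n + 1 : ℝ))
  have hK : Tendsto (fun c : ℝ => ENNReal.ofReal (c * K)) (𝓝[>] 0) (𝓝 0) := by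
    simpa [Function.comp_def] using
      ((ENNReal.continuous_ofReal.comp (continuous_mul_const K)).tendsto 0).mono_left
        nhdsWithin_le_nhds
  refine le_antisymm (ge_of_tendsto hK ?_) zero_le
  filter_upwards [Ioc_mem_nhdsGT zero_lt_one] with c hc
  exact volume_not_isBadlyApproximableVec_inter_closedBall_le hc.1 hc.2 hR

theorem ae_isBadlyApproximableVec (n : ℕ) : ∀ᵐ a : Fin n → ℝ, IsBadlyApproximableVec a := by
  rw [ae_iff, ← inter_univ {a : Fin n → ℝ | _}, ← iUnion_closedBall_nat 0, inter_iUnion,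
    measure_iUnion_null_iff]
  exact fun R => volume_not_isBadlyApproximableVec_inter_closedBall R.cast_nonneg

lemma isBadlyApproximableMatrix_of_row {n : ℕ} {Θ : Matrix (Fin n) (Fin n) ℝ} {i : Fin n}
    (h : IsBadlyApproximableVec (Θ i)) : IsBadlyApproximableMatrix Θ := by
  refine ⟨Pi.single i 1, ?_⟩
  have hu : (fun j => ((Pi.single i 1 : Fin n → ℤ) j : ℝ)) = Pi.single i 1 := by
    ext j; simp [Pi.single_apply]
  rwa [hu, Matrix.mulVec_single_one, Matrix.col_transpose]

/-- Almost every matrix `Θ ∈ M_n(ℝ) ≅ ℝ^{n²}` is badly approximable. -/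
theorem ae_badlyApproximable_matrix (n : ℕ) :
    volume {Θ : Fin n → Fin n → ℝ | ¬ IsBadlyApproximableMatrix (Matrix.of Θ)} = 0 := by
  rw [← ae_iff]
  rcases n with _ | n
  · exact .of_forall fun Θ =>
      ⟨0, 1, one_pos, 1, one_pos, fun q hq => absurd (Subsingleton.elim q 0) hq⟩
  · filter_upwards [(Measure.tendsto_eval_ae_ae (i := 0)).eventually (ae_isBadlyApproximableVec _)]
      with Θ hΘ
    exact isBadlyApproximableMatrix_of_row hΘ
end

section
/- Let T be a positive bounded operator on a Hilbert space H such that T^s is trace class for every s > 1. If the limit l = lim_{ε→0⁺} ε·Tr(T^{1+ε}) exists, then the singular values λ_k(T) satisfy (1/log N)·∑_{k=1}^{N} λ_k(T) → l as N → ∞ (i.e., T is Dixmier traceable with Dixmier trace l). -/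
/-!
Karamata's Tauberian argument. Substituting `(n + 1) ε` for `ε` in the hypothesis gives
`ε ∑ λₖ^(1+ε) (λₖ^ε)^n → l / (n + 1) = l ∫₀¹ xⁿ dx`, hence `ε ∑ λₖ^(1+ε) f(λₖ^ε) → l ∫₀¹ f` for
polynomials `f` and, by Weierstrass approximation on an interval containing every `λₖ^ε`, for
continuous `f`. Squeezing `f(x) = x⁻¹ 𝟙[x ≥ e⁻¹]` between continuous functions gives
`ε ∑_{λₖ ≥ e^(-1/ε)} λₖ → l`. Taking `e^(-1/ε) = N^(-(1 ± δ))`, monotonicity of `λ` compares this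
truncated sum with `∑_{k<N} λₖ`: the `λₖ < N^(-(1+δ))` with `k < N` add up to at most `N^(-δ) ≤ 1`,
and fewer than `N` of the `λₖ` are `≥ N^(-(1-δ))`, since their sum is `O(log N) = o(N^δ)`.
-/

open Filter Topology Set Real Polynomial

theorem tendsto_of_forall_squeeze {α : Type*} {f : Filter α} {x : α → ℝ} {L C : ℝ}
    (h : ∀ᶠ η in 𝓝[>] (0 : ℝ), ∃ u v : α → ℝ, ∃ cu cv : ℝ,
      Tendsto u f (𝓝 cu) ∧ Tendsto v f (𝓝 cv) ∧ L - C * η ≤ cu ∧ cv ≤ L + C * η ∧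
        ∀ᶠ n in f, u n ≤ x n ∧ x n ≤ v n) :
    Tendsto x f (𝓝 L) := by
  have hC : Tendsto (fun η => C * η) (𝓝[>] (0 : ℝ)) (𝓝 0) := by
    simpa using ((continuous_const_mul C).tendsto 0).mono_left nhdsWithin_le_nhds
  refine tendsto_order.2 ⟨fun a ha => ?_, fun b hb => ?_⟩
  · obtain ⟨η, ⟨u, v, cu, cv, hu, -, hcu, -, huv⟩, hη⟩ :=
      (h.and (hC.eventually (gt_mem_nhds (sub_pos.2 ha)))).exists
    filter_upwards [hu.eventually (lt_mem_nhds (by linarith : a < cu)), huv] with n hun hn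
    linarith [hn.1]
  · obtain ⟨η, ⟨u, v, cu, cv, -, hv, -, hcv, huv⟩, hη⟩ :=
      (h.and (hC.eventually (gt_mem_nhds (sub_pos.2 hb)))).exists
    filter_upwards [hv.eventually (gt_mem_nhds (by linarith : cv < b)), huv] with n hvn hn
    linarith [hn.2]

lemma tendsto_const_mul_nhdsGT_zero {c : ℝ} (hc : 0 < c) :
    Tendsto (c * ·) (𝓝[>] (0 : ℝ)) (𝓝[>] 0) := by
  rw [Tendsto, map_le_iff_le_comap, comap_mulLeft_nhdsGT_zero hc]

lemma rpow_one_add_mul_rpow_pow {x ε : ℝ} (hx : 0 ≤ x) (hε : 0 < ε) (n : ℕ) :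
    x ^ (1 + ε) * (x ^ ε) ^ n = x ^ (1 + (n + 1) * ε) := by
  rcases hx.eq_or_lt with rfl | hx
  · rw [zero_rpow (by positivity), zero_rpow (by positivity), zero_mul,
      zero_rpow (by positivity)]
  · rw [← rpow_natCast, ← rpow_mul hx.le, ← rpow_add hx]
    ring_nf

/-- `weightedTrace lam f ε` is `ε Tr(T^{1+ε} f(T^ε))` for `T` with eigenvalues `lam`. -/
noncomputable def weightedTrace (lam : ℕ → ℝ) (f : ℝ → ℝ) (ε : ℝ) : ℝ :=
  ε * ∑' k, lam k ^ (1 + ε) * f (lam k ^ ε)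

section WeightedTrace

variable {lam : ℕ → ℝ} {f g : ℝ → ℝ} {ε : ℝ}

lemma weightedTrace_add (hf : Summable fun k => lam k ^ (1 + ε) * f (lam k ^ ε))
    (hg : Summable fun k => lam k ^ (1 + ε) * g (lam k ^ ε)) :
    weightedTrace lam (fun x => f x + g x) ε = weightedTrace lam f ε + weightedTrace lam g ε := by
  simp only [weightedTrace, mul_add, hf.tsum_add hg]

lemma weightedTrace_sub (hf : Summable fun k => lam k ^ (1 + ε) * f (lam k ^ ε))
    (hg : Summable fun k => lam k ^ (1 + ε) * g (lam k ^ ε)) :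
    weightedTrace lam (fun x => f x - g x) ε = weightedTrace lam f ε - weightedTrace lam g ε := by
  simp only [weightedTrace, mul_sub, hf.tsum_sub hg]

lemma weightedTrace_const_mul (c : ℝ) :
    weightedTrace lam (fun x => c * f x) ε = c * weightedTrace lam f ε := by
  simp only [weightedTrace, mul_left_comm _ c, tsum_mul_left]

lemma weightedTrace_mono (hnn : ∀ k, 0 ≤ lam k) (hε : 0 ≤ ε) (hfg : ∀ x, f x ≤ g x)
    (hf : Summable fun k => lam k ^ (1 + ε) * f (lam k ^ ε))
    (hg : Summable fun k => lam k ^ (1 + ε) * g (lam k ^ ε)) :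
    weightedTrace lam f ε ≤ weightedTrace lam g ε :=
  mul_le_mul_of_nonneg_left (hf.tsum_le_tsum
    (fun k => mul_le_mul_of_nonneg_left (hfg _) (rpow_nonneg (hnn k) _)) hg) hε

lemma norm_rpow_mul_le (hnn : ∀ k, 0 ≤ lam k) {M : ℝ} {k : ℕ} (hf : |f (lam k ^ ε)| ≤ M) :
    ‖lam k ^ (1 + ε) * f (lam k ^ ε)‖ ≤ M * lam k ^ (1 + ε) := by
  rw [norm_eq_abs, abs_mul, abs_of_nonneg (rpow_nonneg (hnn k) _), mul_comm]
  exact mul_le_mul_of_nonneg_right hf (rpow_nonneg (hnn k) _)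

variable (hnn : ∀ k, 0 ≤ lam k) (htrace : ∀ s : ℝ, 1 < s → Summable fun k => lam k ^ s)
include hnn htrace

lemma summable_weighted_of_abs_le {M : ℝ} (hε : 0 < ε) (hf : ∀ k, |f (lam k ^ ε)| ≤ M) :
    Summable fun k => lam k ^ (1 + ε) * f (lam k ^ ε) :=
  .of_norm_bounded ((htrace (1 + ε) (by linarith)).mul_left M) fun k => norm_rpow_mul_le hnn (hf k)

lemma abs_weightedTrace_le {η : ℝ} (hε : 0 < ε) (hf : ∀ k, |f (lam k ^ ε)| ≤ η) :
    |weightedTrace lam f ε| ≤ η * (ε * ∑' k, lam k ^ (1 + ε)) := by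
  have hsum := tsum_of_norm_bounded ((htrace (1 + ε) (by linarith)).hasSum.mul_left η)
    fun k => norm_rpow_mul_le hnn (hf k)
  rw [norm_eq_abs] at hsum
  rw [weightedTrace, abs_mul, abs_of_pos hε, mul_left_comm]
  exact mul_le_mul_of_nonneg_left hsum hε.le

end WeightedTrace

section Karamata

variable {lam : ℕ → ℝ} {l B : ℝ} (hnn : ∀ k, 0 ≤ lam k)
  (hlim : Tendsto (fun ε : ℝ => ε * ∑' k, lam k ^ (1 + ε)) (𝓝[>] 0) (𝓝 l))

include hnn hlim

lemma nonneg_of_tendsto_mul_tsum_rpow : 0 ≤ l :=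
  ge_of_tendsto hlim <| eventually_nhdsWithin_of_forall fun ε (hε : 0 < ε) =>
    mul_nonneg hε.le (tsum_nonneg fun k => rpow_nonneg (hnn k) _)

lemma tendsto_weightedTrace_pow (n : ℕ) :
    Tendsto (weightedTrace lam (· ^ n)) (𝓝[>] 0) (𝓝 (l / (n + 1))) := by
  have hn : (0 : ℝ) < n + 1 := by positivity
  have h := (hlim.comp (tendsto_const_mul_nhdsGT_zero hn)).const_mul (n + 1 : ℝ)⁻¹
  rw [inv_mul_eq_div] at h
  refine h.congr' (eventually_nhdsWithin_of_forall fun ε (hε : 0 < ε) => ?_)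
  simp only [Function.comp_apply, weightedTrace, rpow_one_add_mul_rpow_pow (hnn _) hε]
  field_simp

variable (htrace : ∀ s : ℝ, 1 < s → Summable fun k => lam k ^ s) (hB : ∀ k, lam k ≤ B)
include htrace hB

omit hlim htrace in
lemma rpow_mem_Icc_max {ε : ℝ} (hε : 0 ≤ ε) (hε1 : ε ≤ 1) (k : ℕ) :
    lam k ^ ε ∈ Icc 0 (max 1 B) := by
  refine ⟨rpow_nonneg (hnn k) ε, ?_⟩
  rcases le_or_gt (lam k) 1 with h | h
  · exact (rpow_le_one (hnn k) h hε).trans (le_max_left _ _)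
  · calc lam k ^ ε ≤ lam k ^ (1 : ℝ) := rpow_le_rpow_of_exponent_le h.le hε1
      _ = lam k := rpow_one _
      _ ≤ max 1 B := (hB k).trans (le_max_right _ _)

omit hlim in
lemma summable_weighted_of_continuous {f : ℝ → ℝ} (hf : Continuous f) {ε : ℝ} (hε : 0 < ε)
    (hε1 : ε ≤ 1) : Summable fun k => lam k ^ (1 + ε) * f (lam k ^ ε) := by
  obtain ⟨M, hM⟩ := isCompact_Icc.exists_bound_of_continuousOn hf.continuousOn
  exact summable_weighted_of_abs_le hnn htrace hε
    fun k => hM _ (rpow_mem_Icc_max hnn hB hε.le hε1 k)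

lemma tendsto_weightedTrace_polynomial (p : ℝ[X]) :
    Tendsto (weightedTrace lam p.eval) (𝓝[>] 0) (𝓝 (l * ∫ x in (0 : ℝ)..1, p.eval x)) := by
  induction p using Polynomial.induction_on' with
  | add p q hp hq =>
    simp only [eval_add, intervalIntegral.integral_add (p.continuous.intervalIntegrable 0 1)
      (q.continuous.intervalIntegrable 0 1), mul_add]
    refine (hp.add hq).congr' ?_
    filter_upwards [Ioc_mem_nhdsGT one_pos] with ε ⟨hε, hε1⟩
    exact (weightedTrace_add (f := p.eval) (g := q.eval)
      (summable_weighted_of_continuous hnn htrace hB p.continuous hε hε1)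
      (summable_weighted_of_continuous hnn htrace hB q.continuous hε hε1)).symm
  | monomial n a =>
    have hW : weightedTrace lam (monomial n a).eval = fun ε => a * weightedTrace lam (· ^ n) ε :=
      funext fun ε => by simp only [eval_monomial, weightedTrace_const_mul (f := (· ^ n))]
    rw [hW]
    convert (tendsto_weightedTrace_pow hnn hlim n).const_mul a using 2
    simp only [eval_monomial, intervalIntegral.integral_const_mul, integral_pow]
    field_simp
    simp

theorem tendsto_weightedTrace_of_continuous {f : ℝ → ℝ} (hf : Continuous f) :
    Tendsto (weightedTrace lam f) (𝓝[>] 0) (𝓝 (l * ∫ x in (0 : ℝ)..1, f x)) := by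
  have hl := nonneg_of_tendsto_mul_tsum_rpow hnn hlim
  refine tendsto_of_forall_squeeze (C := 2 * l) ?_
  filter_upwards [self_mem_nhdsWithin] with η (hη : 0 < η)
  obtain ⟨p, hp⟩ := exists_polynomial_near_of_continuousOn 0 (max 1 B) f hf.continuousOn η hη
  have hint : |(∫ x in (0 : ℝ)..1, p.eval x) - ∫ x in (0 : ℝ)..1, f x| ≤ η := by
    rw [← intervalIntegral.integral_sub (p.continuous.intervalIntegrable 0 1)
      (hf.intervalIntegrable 0 1)]
    have := intervalIntegral.norm_integral_le_of_norm_le_const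
      (f := fun x => p.eval x - f x) fun x hx => by
        rw [uIoc_of_le zero_le_one] at hx
        exact (hp x ⟨hx.1.le, hx.2.trans (le_max_left 1 B)⟩).le
    norm_num at this
    exact this
  have hP := tendsto_weightedTrace_polynomial hnn hlim htrace hB p
  refine ⟨_, _, _, _, hP.sub (hlim.const_mul η), hP.add (hlim.const_mul η), ?_, ?_, ?_⟩
  · nlinarith [abs_le.1 hint]
  · nlinarith [abs_le.1 hint]
  filter_upwards [Ioc_mem_nhdsGT one_pos] with ε ⟨hε, hε1⟩
  have hdiff := abs_weightedTrace_le hnn htrace (f := fun x => f x - p.eval x) hε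
    fun k => by rw [abs_sub_comm]; exact (hp _ (rpow_mem_Icc_max hnn hB hε.le hε1 k)).le
  rw [weightedTrace_sub (f := f) (g := p.eval)
    (summable_weighted_of_continuous hnn htrace hB hf hε hε1)
    (summable_weighted_of_continuous hnn htrace hB p.continuous hε hε1)] at hdiff
  constructor <;> linarith [abs_le.1 hdiff]

end Karamata

lemma two_mul_exp_neg_one_le_one : 2 * exp (-1) ≤ 1 := by
  rw [exp_neg, ← div_eq_mul_inv, div_le_one (exp_pos 1)]
  linarith [add_one_le_exp (1 : ℝ)]

lemma inv_max_exp_neg_one_le (x : ℝ) : (max x (exp (-1)))⁻¹ ≤ exp 1 := by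
  rw [← inv_inv (exp 1), ← exp_neg]
  exact inv_anti₀ (exp_pos _) (le_max_right _ _)

noncomputable def ramp (a w x : ℝ) : ℝ := min 1 (max 0 ((x - a) / w))

section Ramp

variable {a w x : ℝ}

lemma ramp_nonneg : 0 ≤ ramp a w x := le_min zero_le_one (le_max_left _ _)

lemma ramp_le_one : ramp a w x ≤ 1 := min_le_left _ _

lemma ramp_of_le (hw : 0 < w) (hx : x ≤ a) : ramp a w x = 0 := by
  rw [ramp, max_eq_left (div_nonpos_of_nonpos_of_nonneg (by linarith) hw.le),
    min_eq_right zero_le_one]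

lemma ramp_of_ge (hw : 0 < w) (hx : a + w ≤ x) : ramp a w x = 1 := by
  have h : 1 ≤ (x - a) / w := (one_le_div hw).2 (by linarith)
  rw [ramp, max_eq_right (zero_le_one.trans h), min_eq_left h]

lemma continuous_ramp (a w : ℝ) : Continuous (ramp a w) := by
  unfold ramp
  fun_prop

end Ramp

/-- Chosen so that `x ^ (1 + ε) * invCutoff (x ^ ε)` is `x` for `x ≥ exp (-1/ε)` and `0` below. -/
noncomputable def invCutoff (x : ℝ) : ℝ := if exp (-1) ≤ x then x⁻¹ else 0

/-- Continuous minorants (`a = e⁻¹`) and majorants (`a + w ≤ e⁻¹`) of `invCutoff`. -/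
noncomputable def rampInvCutoff (a w x : ℝ) : ℝ := ramp a w x * (max x (exp (-1)))⁻¹

section Cutoff

variable {a w θ : ℝ}

lemma abs_invCutoff_le (x : ℝ) : |invCutoff x| ≤ exp 1 := by
  unfold invCutoff
  split_ifs with h
  · rw [abs_of_pos (inv_pos.2 ((exp_pos _).trans_le h)), ← max_eq_left h]
    exact inv_max_exp_neg_one_le x
  · simp [(exp_pos 1).le]

lemma rampInvCutoff_nonneg (x : ℝ) : 0 ≤ rampInvCutoff a w x :=
  mul_nonneg ramp_nonneg (inv_nonneg.2 ((exp_pos _).le.trans (le_max_right _ _)))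

lemma rampInvCutoff_le_inv_max (x : ℝ) : rampInvCutoff a w x ≤ (max x (exp (-1)))⁻¹ :=
  mul_le_of_le_one_left (inv_nonneg.2 ((exp_pos _).le.trans (le_max_right _ _))) ramp_le_one

lemma abs_rampInvCutoff_le (x : ℝ) : |rampInvCutoff a w x| ≤ exp 1 := by
  rw [abs_of_nonneg (rampInvCutoff_nonneg x)]
  exact (rampInvCutoff_le_inv_max x).trans (inv_max_exp_neg_one_le x)

lemma continuous_rampInvCutoff (a w : ℝ) : Continuous (rampInvCutoff a w) :=
  (continuous_ramp a w).mul <| (continuous_id.max continuous_const).inv₀ fun x =>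
    ((exp_pos _).trans_le (le_max_right x _)).ne'

lemma rampInvCutoff_le_invCutoff (hw : 0 < w) (x : ℝ) :
    rampInvCutoff (exp (-1)) w x ≤ invCutoff x := by
  unfold invCutoff
  split_ifs with h
  · exact (rampInvCutoff_le_inv_max x).trans_eq (by rw [max_eq_left h])
  · rw [rampInvCutoff, ramp_of_le hw (not_le.1 h).le, zero_mul]

lemma invCutoff_le_rampInvCutoff (hw : 0 < w) (haw : a + w ≤ exp (-1)) (x : ℝ) :
    invCutoff x ≤ rampInvCutoff a w x := by
  unfold invCutoff
  split_ifs with h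
  · rw [rampInvCutoff, ramp_of_ge hw (haw.trans h), max_eq_left h, one_mul]
  · exact rampInvCutoff_nonneg x

lemma integral_inv_exp_neg_one_one : ∫ x in exp (-1)..1, x⁻¹ = 1 := by
  rw [integral_inv, one_div, log_inv, log_exp, neg_neg]
  rw [uIcc_of_le ((two_mul_exp_neg_one_le_one).trans' (by linarith [exp_pos (-1)]))]
  exact fun h => (exp_pos _).not_ge h.1

lemma integral_rampInvCutoff_le (hθ : 0 < θ) (hθ1 : θ ≤ 1) :
    ∫ x in (0 : ℝ)..1, rampInvCutoff (exp (-1) * (1 - θ)) (exp (-1) * θ) x ≤ 1 + θ := by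
  set c := exp (-1) with hc
  have hc0 : 0 < c := exp_pos _
  have hc1 : c ≤ 1 := by linarith [two_mul_exp_neg_one_le_one]
  have ha : 0 ≤ c * (1 - θ) := mul_nonneg hc0.le (by linarith)
  have hac : c * (1 - θ) ≤ c := by nlinarith
  have hw : 0 < c * θ := mul_pos hc0 hθ
  have hi := fun u v => (continuous_rampInvCutoff (c * (1 - θ)) (c * θ)).intervalIntegrable
    (μ := MeasureTheory.volume) u v
  rw [← intervalIntegral.integral_add_adjacent_intervals (hi 0 (c * (1 - θ))) (hi _ 1),
    ← intervalIntegral.integral_add_adjacent_intervals (hi (c * (1 - θ)) c) (hi c 1)]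
  have h₁ : ∫ x in (0 : ℝ)..c * (1 - θ), rampInvCutoff (c * (1 - θ)) (c * θ) x = 0 := by
    rw [intervalIntegral.integral_congr (g := fun _ => 0), intervalIntegral.integral_zero]
    intro x hx
    rw [uIcc_of_le ha] at hx
    rw [rampInvCutoff, ramp_of_le hw hx.2, zero_mul]
  have h₂ : ∫ x in c * (1 - θ)..c, rampInvCutoff (c * (1 - θ)) (c * θ) x ≤ θ := by
    calc _ ≤ ∫ _ in c * (1 - θ)..c, exp 1 :=
          intervalIntegral.integral_mono_on hac (hi _ _) intervalIntegrable_const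
            fun x _ => (le_abs_self _).trans (abs_rampInvCutoff_le x)
      _ = θ := by
          have hce : exp (-1) * exp 1 = 1 := by rw [← exp_add]; norm_num
          rw [intervalIntegral.integral_const, smul_eq_mul]
          linear_combination θ * hce
  have h₃ : ∫ x in c..1, rampInvCutoff (c * (1 - θ)) (c * θ) x ≤ 1 := by
    refine (intervalIntegral.integral_mono_on hc1 (hi _ _) ?_ fun x hx => ?_).trans_eq
      integral_inv_exp_neg_one_one
    · exact intervalIntegral.intervalIntegrable_inv
        (fun x hx => ((hc0.trans_le (by rw [uIcc_of_le hc1] at hx; exact hx.1))).ne')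
        continuousOn_id
    · exact (rampInvCutoff_le_inv_max x).trans_eq (by rw [max_eq_left hx.1])
  linarith

lemma one_sub_le_integral_rampInvCutoff (hθ : 0 < θ) (hθ1 : θ ≤ 1) :
    1 - θ ≤ ∫ x in (0 : ℝ)..1, rampInvCutoff (exp (-1)) (exp (-1) * θ) x := by
  set c := exp (-1) with hc
  have hc0 : 0 < c := exp_pos _
  have hw : 0 < c * θ := mul_pos hc0 hθ
  have hb1 : c + c * θ ≤ 1 := by nlinarith [two_mul_exp_neg_one_le_one]
  have hi := fun u v => (continuous_rampInvCutoff c (c * θ)).intervalIntegrable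
    (μ := MeasureTheory.volume) u v
  rw [← intervalIntegral.integral_add_adjacent_intervals (hi 0 (c + c * θ)) (hi _ 1)]
  have h₁ : 0 ≤ ∫ x in (0 : ℝ)..c + c * θ, rampInvCutoff c (c * θ) x :=
    intervalIntegral.integral_nonneg (by positivity) fun x _ => rampInvCutoff_nonneg x
  have h₂ : ∫ x in c + c * θ..1, rampInvCutoff c (c * θ) x = 1 - log (1 + θ) := by
    have hb0 : 0 < c + c * θ := by positivity
    rw [intervalIntegral.integral_congr (g := fun x => x⁻¹), integral_inv, div_eq_mul_inv,
      one_mul, log_inv, show c + c * θ = c * (1 + θ) by ring, log_mul hc0.ne' (by positivity),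
      hc, log_exp]
    · ring
    · rw [uIcc_of_le hb1]
      exact fun h => hb0.not_ge h.1
    · intro x hx
      rw [uIcc_of_le hb1] at hx
      have hcx : c ≤ x := by linarith [hx.1]
      rw [rampInvCutoff, ramp_of_ge hw hx.1, max_eq_left hcx, one_mul]
  have h₃ : log (1 + θ) ≤ θ := by linarith [log_le_sub_one_of_pos (by linarith : 0 < 1 + θ)]
  linarith

end Cutoff

noncomputable def truncatedSum (lam : ℕ → ℝ) (t : ℝ) : ℝ :=
  ∑' k, if t ≤ lam k then lam k else 0

lemma rpow_one_add_mul_invCutoff {x ε : ℝ} (hx : 0 ≤ x) (hε : 0 < ε) :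
    x ^ (1 + ε) * invCutoff (x ^ ε) = if exp (-(1 / ε)) ≤ x then x else 0 := by
  rcases hx.eq_or_lt with rfl | hx
  · simp [zero_rpow (by positivity : 1 + ε ≠ 0), (exp_pos _).not_ge]
  have hiff : exp (-(1 / ε)) ≤ x ↔ exp (-1) ≤ x ^ ε := by
    rw [← rpow_le_rpow_iff (exp_pos _).le hx.le hε, ← exp_mul, neg_mul, one_div,
      inv_mul_cancel₀ hε.ne']
  simp only [invCutoff, ← hiff]
  split_ifs
  · rw [rpow_one_add' hx.le (by positivity), mul_assoc, mul_inv_cancel₀ (by positivity),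
      mul_one]
  · rw [mul_zero]

section Truncated

variable {lam : ℕ → ℝ} {l : ℝ} (hnn : ∀ k, 0 ≤ lam k)
include hnn

lemma weightedTrace_invCutoff {ε : ℝ} (hε : 0 < ε) :
    weightedTrace lam invCutoff ε = ε * truncatedSum lam (exp (-(1 / ε))) := by
  simp only [weightedTrace, truncatedSum, rpow_one_add_mul_invCutoff (hnn _) hε]

lemma summable_truncated (htrace : ∀ s : ℝ, 1 < s → Summable fun k => lam k ^ s) {t : ℝ}
    (ht : 0 < t) : Summable fun k => if t ≤ lam k then lam k else 0 := by
  refine Summable.of_nonneg_of_le (fun k => ite_nonneg (hnn k) le_rfl) (fun k => ?_)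
    ((htrace 2 one_lt_two).mul_left t⁻¹)
  split_ifs with h
  · rw [rpow_two, ← div_eq_inv_mul, le_div_iff₀ ht, sq]
    exact mul_le_mul_of_nonneg_left h (hnn k)
  · exact mul_nonneg (inv_nonneg.2 ht.le) (rpow_nonneg (hnn k) _)

theorem tendsto_mul_truncatedSum {B : ℝ}
    (hlim : Tendsto (fun ε : ℝ => ε * ∑' k, lam k ^ (1 + ε)) (𝓝[>] 0) (𝓝 l))
    (htrace : ∀ s : ℝ, 1 < s → Summable fun k => lam k ^ s) (hB : ∀ k, lam k ≤ B) :
    Tendsto (fun ε => ε * truncatedSum lam (exp (-(1 / ε)))) (𝓝[>] 0) (𝓝 l) := by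
  have hl := nonneg_of_tendsto_mul_tsum_rpow hnn hlim
  refine tendsto_of_forall_squeeze (C := l) ?_
  filter_upwards [Ioc_mem_nhdsGT one_pos] with θ ⟨hθ, hθ1⟩
  have hw : 0 < exp (-1) * θ := mul_pos (exp_pos _) hθ
  refine ⟨_, _, _, _,
    tendsto_weightedTrace_of_continuous hnn hlim htrace hB
      (continuous_rampInvCutoff (exp (-1)) (exp (-1) * θ)),
    tendsto_weightedTrace_of_continuous hnn hlim htrace hB
      (continuous_rampInvCutoff (exp (-1) * (1 - θ)) (exp (-1) * θ)),
    ?_, ?_, ?_⟩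
  · nlinarith [one_sub_le_integral_rampInvCutoff hθ hθ1]
  · nlinarith [integral_rampInvCutoff_le hθ hθ1]
  filter_upwards [self_mem_nhdsWithin] with ε (hε : 0 < ε)
  have hsum {f : ℝ → ℝ} (hf : ∀ x, |f x| ≤ exp 1) :=
    summable_weighted_of_abs_le hnn htrace (f := f) hε fun k => hf _
  rw [← weightedTrace_invCutoff hnn hε]
  exact ⟨weightedTrace_mono hnn hε.le (rampInvCutoff_le_invCutoff hw)
      (hsum abs_rampInvCutoff_le) (hsum abs_invCutoff_le),
    weightedTrace_mono hnn hε.le (invCutoff_le_rampInvCutoff hw (le_of_eq (by ring)))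
      (hsum abs_invCutoff_le) (hsum abs_rampInvCutoff_le)⟩

end Truncated

lemma mul_rpow_neg {x d : ℝ} (hx : 0 ≤ x) (hd : d ≠ 1) : x * x ^ (-d) = x ^ (1 - d) := by
  rw [← rpow_one_add' hx (by contrapose! hd; linarith), sub_eq_add_neg]

lemma tendsto_inv_mul_log_nhdsGT_zero {d : ℝ} (hd : 0 < d) :
    Tendsto (fun N : ℕ => (d * log N)⁻¹) atTop (𝓝[>] 0) :=
  tendsto_inv_atTop_nhdsGT_zero.comp
    ((tendsto_log_atTop.comp tendsto_natCast_atTop_atTop).const_mul_atTop hd)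

section Tauberian

variable {lam : ℕ → ℝ} {l : ℝ} (hnn : ∀ k, 0 ≤ lam k)
  (hsum : ∀ t > 0, Summable fun k => if t ≤ lam k then lam k else 0)
  (hG : Tendsto (fun ε => ε * truncatedSum lam (exp (-(1 / ε)))) (𝓝[>] 0) (𝓝 l))

include hnn hsum in
lemma sum_range_le_truncatedSum_add {t : ℝ} (ht : 0 < t) (N : ℕ) :
    ∑ k ∈ Finset.range N, lam k ≤ truncatedSum lam t + N * t := by
  calc ∑ k ∈ Finset.range N, lam k
      ≤ ∑ k ∈ Finset.range N, ((if t ≤ lam k then lam k else 0) + t) :=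
        Finset.sum_le_sum fun k _ => by
          split_ifs with h
          · linarith
          · linarith [not_le.1 h]
    _ = ∑ k ∈ Finset.range N, (if t ≤ lam k then lam k else 0) + N * t := by
        rw [Finset.sum_add_distrib, Finset.sum_const, Finset.card_range, nsmul_eq_mul]
    _ ≤ truncatedSum lam t + N * t := by
        gcongr
        exact (hsum t ht).sum_le_tsum _ fun k _ => ite_nonneg (hnn k) le_rfl

include hnn hsum in
lemma mul_le_truncatedSum (hanti : Antitone lam) {t : ℝ} (ht : 0 < t) {k : ℕ}
    (hk : t ≤ lam k) : (k + 1) * t ≤ truncatedSum lam t := by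
  calc (k + 1 : ℝ) * t = ∑ _j ∈ Finset.range (k + 1), t := by simp
    _ ≤ ∑ j ∈ Finset.range (k + 1), (if t ≤ lam j then lam j else 0) :=
        Finset.sum_le_sum fun j hj => by
          have h := hk.trans (hanti (Nat.lt_succ_iff.1 (Finset.mem_range.1 hj)))
          rwa [if_pos h]
    _ ≤ truncatedSum lam t := (hsum t ht).sum_le_tsum _ fun j _ => ite_nonneg (hnn j) le_rfl

include hnn hsum in
lemma truncatedSum_le_sum_range (hanti : Antitone lam) {t : ℝ} (ht : 0 < t) {N : ℕ}
    (hN : truncatedSum lam t < N * t) : truncatedSum lam t ≤ ∑ k ∈ Finset.range N, lam k := by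
  have hsupp : ∀ k ∉ Finset.range N, (if t ≤ lam k then lam k else 0) = 0 := by
    intro k hk
    refine if_neg fun h => ?_
    have hNk : (N : ℝ) ≤ k := by exact_mod_cast not_lt.1 (Finset.mem_range.not.1 hk)
    nlinarith [mul_le_truncatedSum hnn hsum hanti ht h]
  rw [truncatedSum, tsum_eq_sum hsupp]
  exact Finset.sum_le_sum fun k _ => by split_ifs <;> simp [hnn k]

include hG in
lemma tendsto_truncatedSum_rpow_div_log {d : ℝ} (hd : 0 < d) :
    Tendsto (fun N : ℕ => truncatedSum lam ((N : ℝ) ^ (-d)) / (d * log N)) atTop (𝓝 l) := by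
  refine (hG.comp (tendsto_inv_mul_log_nhdsGT_zero hd)).congr' ?_
  filter_upwards [eventually_ge_atTop 1] with N hN
  have hN0 : (0 : ℝ) < N := by exact_mod_cast hN
  simp only [Function.comp_apply, one_div, inv_inv, rpow_def_of_pos hN0, inv_mul_eq_div]
  ring_nf

include hnn hsum hG in
lemma eventually_le_sum_range_div_log (hanti : Antitone lam) {δ : ℝ} (hδ : 0 < δ)
    (hδ1 : δ < 1) :
    ∀ᶠ N : ℕ in atTop, (1 - δ) * (truncatedSum lam ((N : ℝ) ^ (-(1 - δ))) / ((1 - δ) * log N))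
      ≤ (∑ k ∈ Finset.range N, lam k) / log N := by
  have hR := tendsto_truncatedSum_rpow_div_log hG (by linarith : 0 < 1 - δ)
  have hsmall : Tendsto (fun N : ℕ => log N / (N : ℝ) ^ δ) atTop (𝓝 0) :=
    (isLittleO_log_rpow_atTop hδ).tendsto_div_nhds_zero.comp tendsto_natCast_atTop_atTop
  -- the truncated sum is `O(log N) = o(N ^ δ)`
  have h := (hR.mul (hsmall.const_mul (1 - δ))).eventually
    (gt_mem_nhds (by simp : l * ((1 - δ) * 0) < 1))
  have h1δ : 0 < 1 - δ := by linarith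
  filter_upwards [h, eventually_gt_atTop 1] with N hN hN1
  have hN0 : (0 : ℝ) < N := by positivity
  have hlogN : 0 < log N := log_pos (by exact_mod_cast hN1)
  have hNδ : (0 : ℝ) < (N : ℝ) ^ δ := rpow_pos_of_pos hN0 δ
  have hlt : truncatedSum lam ((N : ℝ) ^ (-(1 - δ))) < N * (N : ℝ) ^ (-(1 - δ)) := by
    rw [mul_rpow_neg hN0.le (by linarith), sub_sub_cancel, ← div_lt_one hNδ]
    convert hN using 1
    field_simp
  have hle := truncatedSum_le_sum_range hnn hsum hanti (rpow_pos_of_pos hN0 _) hlt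
  calc (1 - δ) * (truncatedSum lam ((N : ℝ) ^ (-(1 - δ))) / ((1 - δ) * log N))
      = truncatedSum lam ((N : ℝ) ^ (-(1 - δ))) / log N := by
        field_simp
    _ ≤ (∑ k ∈ Finset.range N, lam k) / log N := div_le_div_of_nonneg_right hle hlogN.le

include hnn hsum in
lemma sum_range_div_log_le {δ : ℝ} (hδ : 0 < δ) {N : ℕ} (hN : 0 < log N) :
    (∑ k ∈ Finset.range N, lam k) / log N
      ≤ (1 + δ) * (truncatedSum lam ((N : ℝ) ^ (-(1 + δ))) / ((1 + δ) * log N)) + (log N)⁻¹ := by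
  have hN1 : (1 : ℝ) ≤ N := by
    by_contra h
    have : log N ≤ 0 := log_nonpos (Nat.cast_nonneg N) (not_le.1 h).le
    linarith
  have hle := sum_range_le_truncatedSum_add hnn hsum
    (rpow_pos_of_pos (by linarith : (0 : ℝ) < N) (-(1 + δ))) N
  rw [mul_rpow_neg (by linarith) (by linarith), sub_add_cancel_left] at hle
  have hNδ : (N : ℝ) ^ (-δ) ≤ 1 := rpow_le_one_of_one_le_of_nonpos hN1 (by linarith)
  calc (∑ k ∈ Finset.range N, lam k) / log N
      ≤ (truncatedSum lam ((N : ℝ) ^ (-(1 + δ))) + 1) / log N :=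
        div_le_div_of_nonneg_right (by linarith) hN.le
    _ = _ := by field_simp

include hnn hsum hG in
theorem tendsto_sum_range_div_log_of_truncatedSum (hanti : Antitone lam) :
    Tendsto (fun N : ℕ => (∑ k ∈ Finset.range N, lam k) / log N) atTop (𝓝 l) := by
  have hlog : Tendsto (fun N : ℕ => log N) atTop atTop :=
    tendsto_log_atTop.comp tendsto_natCast_atTop_atTop
  refine tendsto_of_forall_squeeze (C := l) ?_
  filter_upwards [Ioo_mem_nhdsGT one_pos] with δ ⟨hδ, hδ1⟩
  refine ⟨_, _, _, _,
    (tendsto_truncatedSum_rpow_div_log hG (by linarith : 0 < 1 - δ)).const_mul (1 - δ),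
    ((tendsto_truncatedSum_rpow_div_log hG (by linarith : 0 < 1 + δ)).const_mul (1 + δ)).add
      hlog.inv_tendsto_atTop, le_of_eq (by ring), le_of_eq (by ring), ?_⟩
  filter_upwards [eventually_le_sum_range_div_log hnn hsum hG hanti hδ hδ1,
    hlog.eventually_gt_atTop 0] with N hlo hN
  exact ⟨hlo, sum_range_div_log_le hnn hsum hδ hN⟩

end Tauberian

theorem dixmier_traceable_of_limit_general
    (lam : ℕ → ℝ)
    (hanti : Antitone lam) (hnn : ∀ k, 0 ≤ lam k)
    (htrace : ∀ s : ℝ, 1 < s → Summable fun k => lam k ^ s)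
    (l : ℝ)
    (hlim : Tendsto (fun ε : ℝ => ε * ∑' k, lam k ^ (1 + ε))
      (nhdsWithin 0 (Set.Ioi 0)) (nhds l)) :
    Tendsto (fun N : ℕ => (∑ k ∈ Finset.range N, lam k) / Real.log N) atTop (nhds l) :=
  tendsto_sum_range_div_log_of_truncatedSum hnn (fun _ ht => summable_truncated hnn htrace ht)
    (tendsto_mul_truncatedSum hnn hlim htrace fun k => hanti (Nat.zero_le k)) hanti

/-- If `T ≥ 0` is a compact operator on a Hilbert space, diagonalized by a Hilbert basis
with non-increasing nonnegative eigenvalue sequence `lam`, such that `T^s` is trace class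
for all `s > 1` (i.e. `∑ lam k ^ s < ∞`), and `l = lim_{ε→0⁺} ε Tr(T^{1+ε})` exists, then
`T` is Dixmier traceable with `(log N)⁻¹ ∑_{k<N} lam k → l`. -/
theorem dixmier_traceable_of_limit
    {H : Type*} [NormedAddCommGroup H] [InnerProductSpace ℂ H] [CompleteSpace H]
    (T : H →L[ℂ] H) (hT : T.IsPositive) (hcpt : IsCompactOperator T)
    (e : HilbertBasis ℕ ℂ H) (lam : ℕ → ℝ)
    (heig : ∀ k, T (e k) = (lam k : ℂ) • e k)
    (hanti : Antitone lam) (hnn : ∀ k, 0 ≤ lam k)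
    (htrace : ∀ s : ℝ, 1 < s → Summable fun k => lam k ^ s)
    (l : ℝ)
    (hlim : Tendsto (fun ε : ℝ => ε * ∑' k, lam k ^ (1 + ε))
      (nhdsWithin 0 (Set.Ioi 0)) (nhds l)) :
    Tendsto (fun N : ℕ => (∑ k ∈ Finset.range N, lam k) / Real.log N) atTop (nhds l) :=
  dixmier_traceable_of_limit_general lam hanti hnn htrace l hlim
end

section
/- In a real spectral triple, for any unitary u ∈ A and any self-adjoint one-form A, the gauge transformation law V_u 𝒟_A V_u* = 𝒟_{γ_u(A)} holds, where γ_u(A) := u[𝒟,u*] + uAu*. -/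
section CjOp

variable {H : Type*} [NormedAddCommGroup H] [InnerProductSpace ℂ H]

/-- Conjugation of an operator by the real structure `J`: `T ↦ J T J⁻¹`. -/
noncomputable def cjOp (J : H ≃ₛₗᵢ[starRingEnd ℂ] H) (T : H →L[ℂ] H) : H →L[ℂ] H :=
  { toLinearMap :=
    { toFun := fun z => J (T (J.symm z))
      map_add' := fun x y => by simp
      map_smul' := fun c x => by simp [map_smulₛₗ] }
    cont := J.continuous.comp (T.continuous.comp J.symm.continuous) }

@[simp] lemma cjOp_apply (J : H ≃ₛₗᵢ[starRingEnd ℂ] H) (T : H →L[ℂ] H) (z : H) :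
    cjOp J T z = J (T (J.symm z)) := rfl

lemma cjOp_mul (J : H ≃ₛₗᵢ[starRingEnd ℂ] H) (S T : H →L[ℂ] H) :
    cjOp J (S * T) = cjOp J S * cjOp J T := by
  ext z; simp [ContinuousLinearMap.mul_apply]

lemma cjOp_one (J : H ≃ₛₗᵢ[starRingEnd ℂ] H) : cjOp J (1 : H →L[ℂ] H) = 1 := by
  ext z; simp

lemma cjOp_sub (J : H ≃ₛₗᵢ[starRingEnd ℂ] H) (S T : H →L[ℂ] H) :
    cjOp J (S - T) = cjOp J S - cjOp J T := by
  ext z; simp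

lemma cjOp_sum (J : H ≃ₛₗᵢ[starRingEnd ℂ] H) {k : ℕ} (f : Fin k → (H →L[ℂ] H)) :
    cjOp J (∑ i, f i) = ∑ i, cjOp J (f i) := by
  ext z; simp

end CjOp

/-- Gauge transformation law in a real spectral triple: for a unitary `u ∈ A` and a
self-adjoint one-form `A`, `V_u 𝒟_A V_u* = 𝒟_{γ_u(A)}` with
`γ_u(A) = u[𝒟,u*] + uAu*`, where `𝒟_B = 𝒟 + B + ε J B J⁻¹` and `V_u = u J u J⁻¹`. -/
theorem gauge_transformation_law
    {H : Type*} [NormedAddCommGroup H] [InnerProductSpace ℂ H] [CompleteSpace H]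
    (D : H →L[ℂ] H) (hD : IsSelfAdjoint D)
    (J : H ≃ₛₗᵢ[starRingEnd ℂ] H) (ε : ℂ) (hε : ε = 1 ∨ ε = -1)
    (hJD : ∀ x : H, J (D x) = ε • D (J x))
    (𝒜 : StarSubalgebra ℂ (H →L[ℂ] H))
    -- order-zero condition: `[a, J b J⁻¹] = 0` for all `a, b ∈ A`
    (horder0 : ∀ a ∈ 𝒜, ∀ b ∈ 𝒜, ∀ x : H,
      a (J (b (J.symm x))) = J (b (J.symm (a x))))
    -- order-one condition: `[[𝒟,a], J b J⁻¹] = 0` for all `a, b ∈ A`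
    (horder1 : ∀ a ∈ 𝒜, ∀ b ∈ 𝒜, ∀ x : H,
      D (a (J (b (J.symm x)))) - a (D (J (b (J.symm x)))) =
        J (b (J.symm (D (a x) - a (D x)))))
    (u : H →L[ℂ] H) (hu𝒜 : u ∈ 𝒜)
    (huL : star u * u = 1) (huR : u * star u = 1)
    -- `A` is a self-adjoint one-form `∑ i, aᵢ [𝒟, bᵢ]`
    (A : H →L[ℂ] H) (hAsa : IsSelfAdjoint A)
    (k : ℕ) (a b : Fin k → H →L[ℂ] H) (ha : ∀ i, a i ∈ 𝒜) (hb : ∀ i, b i ∈ 𝒜)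
    (hA : A = ∑ i, a i * (D * b i - b i * D))
    -- `𝒟_A` and `γ_u(A)`
    (DA γA : H → H)
    (hDA : ∀ x, DA x = D x + A x + ε • J (A (J.symm x)))
    (hγA : ∀ x, γA x = u (D (star u x)) - u (star u (D x)) + u (A (star u x))) :
    ∀ x : H,
      u (J (u (J.symm (DA (J (star u (J.symm (star u x)))))))) =
        D x + γA x + ε • J (γA (J.symm x)) := by
  intro x
  set w := star u with hw
  have hw𝒜 : w ∈ 𝒜 := by rw [hw]; exact star_mem hu𝒜
  have hεc : (starRingEnd ℂ) ε = ε := by rcases hε with h | h <;> simp [h]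
  have hε2 : ∀ t : H, ε • ε • t = t := by
    intro t; rw [smul_smul]; rcases hε with h | h <;> simp [h]
  have hJD' : ∀ s : H, D (J s) = ε • J (D s) := by
    intro s; rw [hJD s, hε2]
  have cjD : cjOp J D = ε • D := by
    ext z
    simp only [cjOp_apply, ContinuousLinearMap.smul_apply]
    rw [hJD, LinearIsometryEquiv.apply_symm_apply]
  have huw : ∀ t : H, u (w t) = t := by
    intro t
    have h := ContinuousLinearMap.ext_iff.mp huR t
    simpa [ContinuousLinearMap.mul_apply] using h
  -- order-zero condition, operator form
  have comm0 : ∀ e ∈ 𝒜, ∀ c ∈ 𝒜, Commute e (cjOp J c) := by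
    intro e he c hc
    have h : e * cjOp J c = cjOp J c * e := by
      ext z
      simpa [ContinuousLinearMap.mul_apply] using horder0 e he c hc z
    exact h
  -- order-one condition, operator form
  have comm1 : ∀ e ∈ 𝒜, ∀ c ∈ 𝒜, Commute (D * e - e * D) (cjOp J c) := by
    intro e he c hc
    have h : (D * e - e * D) * cjOp J c = cjOp J c * (D * e - e * D) := by
      ext z
      simpa [ContinuousLinearMap.mul_apply, ContinuousLinearMap.sub_apply, map_sub]
        using horder1 e he c hc z
    exact h
  -- mirrored order-one condition: `a` commutes with `[D, J c J⁻¹]`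
  have comm2 : ∀ e ∈ 𝒜, ∀ c ∈ 𝒜, Commute e (D * cjOp J c - cjOp J c * D) := by
    intro e he c hc
    have h : e * (D * cjOp J c - cjOp J c * D) = (D * cjOp J c - cjOp J c * D) * e := by
      ext z
      simp only [ContinuousLinearMap.mul_apply, ContinuousLinearMap.sub_apply, map_sub,
        cjOp_apply]
      have k1 := horder1 e he c hc z
      have k0 := horder0 e he c hc z
      have k0' := horder0 e he c hc (D z)
      simp only [map_sub] at k1
      rw [k0] at k1
      rw [k0']
      exact (sub_eq_sub_iff_sub_eq_sub.mp k1).symm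
    exact h
  -- conjugates of elementary one-form pieces
  have cjForm : ∀ c ∈ 𝒜, ∀ c' ∈ 𝒜,
      cjOp J (c * (D * c' - c' * D)) = cjOp J c * (ε • (D * cjOp J c' - cjOp J c' * D)) := by
    intro c _ c' _
    rw [cjOp_mul, cjOp_sub, cjOp_mul, cjOp_mul, cjD]
    congr 1
    simp [smul_mul_assoc, mul_smul_comm, smul_sub]
  have commW : ∀ e ∈ 𝒜, ∀ c ∈ 𝒜, ∀ c' ∈ 𝒜,
      Commute e (cjOp J (c * (D * c' - c' * D))) := by
    intro e he c hc c' hc'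
    rw [cjForm c hc c' hc']
    exact (comm0 e he c hc).mul_right ((comm2 e he c' hc').smul_right ε)
  -- `u` commutes with `J A J⁻¹`
  have commUcjA : Commute u (cjOp J A) := by
    rw [hA, cjOp_sum]
    exact Commute.sum_right _ _ _ fun i _ => commW u hu𝒜 (a i) (ha i) (b i) (hb i)
  -- `A` commutes with `J w J⁻¹`
  have commA : Commute A (cjOp J w) := by
    rw [hA]
    exact Commute.sum_left _ _ _ fun i _ =>
      (comm0 (a i) (ha i) w hw𝒜).mul_left (comm1 (b i) (hb i) w hw𝒜)
  have commUγ0 : Commute u (cjOp J (u * (D * w - w * D))) := commW u hu𝒜 u hu𝒜 w hw𝒜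
  have commUuAw : Commute u (cjOp J (u * A * w)) := by
    rw [cjOp_mul, cjOp_mul]
    exact (comm0 u hu𝒜 u hu𝒜).mul_right (commUcjA.mul_right (comm0 u hu𝒜 w hw𝒜))
  -- pointwise versions
  have pA : ∀ t : H, A (J (w (J.symm t))) = J (w (J.symm (A t))) := by
    intro t
    have h := ContinuousLinearMap.ext_iff.mp commA.eq t
    simpa [ContinuousLinearMap.mul_apply] using h
  have eG : u (J (u (D (w (J.symm (w x))) - w (D (J.symm (w x)))))) =
      J (u (D (w (J.symm x)) - w (D (J.symm x)))) := by
    have h := ContinuousLinearMap.ext_iff.mp commUγ0.eq (w x)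
    simp only [ContinuousLinearMap.mul_apply, ContinuousLinearMap.sub_apply, cjOp_apply] at h
    rw [huw] at h
    exact h
  have e3 : u (J (u (A (w (J.symm (w x)))))) = J (u (A (w (J.symm x)))) := by
    have h := ContinuousLinearMap.ext_iff.mp commUuAw.eq (w x)
    simp only [ContinuousLinearMap.mul_apply, cjOp_apply] at h
    rw [huw] at h
    exact h
  have e2 : u (J (u (J.symm (A (J (w (J.symm (w x)))))))) = u (A (w x)) := by
    rw [pA (w x), LinearIsometryEquiv.symm_apply_apply, huw,
      LinearIsometryEquiv.apply_symm_apply]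
  have split : u (D (w (J.symm (w x)))) =
      u (D (w (J.symm (w x))) - w (D (J.symm (w x)))) + D (J.symm (w x)) := by
    rw [map_sub, huw]
    abel
  have e1 : u (J (u (J.symm (D (J (w (J.symm (w x)))))))) =
      u (D (w x)) + ε • J (u (D (w (J.symm x)) - w (D (J.symm x)))) := by
    rw [hJD' (w (J.symm (w x)))]
    simp only [map_smulₛₗ, hεc, map_smul, LinearIsometryEquiv.symm_apply_apply]
    rw [split]
    simp only [map_add]
    rw [eG, hJD (J.symm (w x)), LinearIsometryEquiv.apply_symm_apply]
    simp only [map_smul, map_smulₛₗ, RingHom.id_apply, hεc, smul_add, hε2]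
    abel
  -- assemble
  rw [hDA]
  simp only [LinearIsometryEquiv.symm_apply_apply, map_add, map_smulₛₗ, RingHom.id_apply,
    hεc, map_smul]
  rw [e1, e2, e3, hγA x, hγA (J.symm x)]
  simp only [map_add, map_sub, smul_add, smul_sub]
  rw [huw (D x)]
  abel
end
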